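/- arXiv:2207.09518 — 2 statements merged into one kernel-verified Lean document; each statement's English description precedes it below -/
import Mathlib

section
/- Let γ, p ∈ ℝ with γ + 2p < 1 and let W₀ : [0,∞) → ℝ be measurable with |W₀(z)| ≤ C·e^{(γ/2+p)z} for all z ≥ 0. Then ∫₀^{∞} e^{−z/2} W₀(z)·(1 − (e^z+1)^{−ik}) dz → ∫₀^{∞} e^{−z/2} W₀(z) dz as |k| → ∞ (k ∈ ℝ). -/
open MeasureTheory Real Set Filter
open FourierTransform

/-- for `γ+2p < 1` and measurable `W₀` with `|W₀(z)| ≤ C e^{(γ/2+p)z}`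
on `[0,∞)`, one has
`∫₀^∞ e^{−z/2} W₀(z)(1 − (e^z+1)^{−ik}) dz → ∫₀^∞ e^{−z/2} W₀(z) dz` as `|k| → ∞`. -/
theorem stmt_15 (γ p : ℝ) (h1 : γ + 2 * p < 1)
    (W₀ : ℝ → ℝ) (hWmeas : Measurable W₀) (C : ℝ)
    (hW : ∀ z : ℝ, 0 ≤ z → |W₀ z| ≤ C * Real.exp ((γ / 2 + p) * z)) :
    Filter.Tendsto
      (fun k : ℝ => ∫ z in Set.Ioi (0 : ℝ),
        ((Real.exp (-z / 2) * W₀ z : ℝ) : ℂ) *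
          (1 - Complex.exp (-(Complex.I * (k : ℂ)) *
            ((Real.log (Real.exp z + 1) : ℝ) : ℂ))))
      (Filter.atBot ⊔ Filter.atTop)
      (nhds (((∫ z in Set.Ioi (0 : ℝ), Real.exp (-z / 2) * W₀ z : ℝ) : ℂ))) := by
  -- notation
  set φ : ℝ → ℝ := fun z => Real.log (Real.exp z + 1) with hφ
  set ψ : ℝ → ℝ := fun ξ => Real.log (Real.exp ξ - 1) with hψ
  set g : ℝ → ℝ := fun z => Real.exp (-z / 2) * W₀ z with hg
  -- real integrability of g on Ioi 0
  have hb : (0 : ℝ) < 1/2 - (γ/2 + p) := by linarith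
  have hgint : IntegrableOn g (Ioi 0) := by
    refine Integrable.mono' (g := fun z => C * Real.exp (-(1/2 - (γ/2+p)) * z))
      ((exp_neg_integrableOn_Ioi 0 hb).const_mul C) ?_ ?_
    · exact ((Real.measurable_exp.comp (measurable_id.neg.div_const 2)).mul hWmeas).aestronglyMeasurable
    · filter_upwards [ae_restrict_mem measurableSet_Ioi] with z hz
      have hz' : (0:ℝ) ≤ z := le_of_lt hz
      have : |g z| = Real.exp (-z/2) * |W₀ z| := by
        rw [hg, abs_mul, abs_of_pos (Real.exp_pos _)]
      rw [Real.norm_eq_abs, this]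
      calc Real.exp (-z/2) * |W₀ z| ≤ Real.exp (-z/2) * (C * Real.exp ((γ/2+p)*z)) := by
            exact mul_le_mul_of_nonneg_left (hW z hz') (le_of_lt (Real.exp_pos _))
        _ = C * Real.exp (-(1/2 - (γ/2+p)) * z) := by
            rw [← mul_assoc, mul_comm (Real.exp (-z/2)) C, mul_assoc, ← Real.exp_add]
            ring_nf
  -- complex integrability
  have hgmeas : Measurable g :=
    (Real.measurable_exp.comp (measurable_id.neg.div_const 2)).mul hWmeas
  have hgintC : IntegrableOn (fun z => ((g z : ℝ) : ℂ)) (Ioi 0) := hgint.ofReal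
  -- the oscillatory factor has norm 1
  have hE : ∀ (k ξ : ℝ), ‖Complex.exp (-(Complex.I * (k:ℂ)) * (ξ:ℂ))‖ = 1 := by
    intro k ξ
    rw [Complex.norm_exp]
    simp [Complex.exp_re]
  have hEint : ∀ k : ℝ, IntegrableOn
      (fun z => ((g z : ℝ) : ℂ) * Complex.exp (-(Complex.I * (k:ℂ)) * ((φ z : ℝ) : ℂ))) (Ioi 0) := by
    intro k
    refine Integrable.mono' hgintC.norm ?_ ?_
    · apply AEStronglyMeasurable.mul
      · exact (Complex.measurable_ofReal.comp hgmeas).aestronglyMeasurable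
      · apply Continuous.aestronglyMeasurable
        exact Complex.continuous_exp.comp (continuous_const.mul
          (Complex.continuous_ofReal.comp ((Real.continuous_exp.add continuous_const).log
            (fun z => ne_of_gt (add_pos (Real.exp_pos z) one_pos)))))
    · filter_upwards with z
      rw [norm_mul, hE k (φ z)]
      simp
  -- constant value
  have hconst : ∫ z in Ioi (0:ℝ), ((g z : ℝ) : ℂ)
      = ((∫ z in Ioi (0:ℝ), g z : ℝ) : ℂ) := integral_ofReal
  -- split the integral
  have hsplit : ∀ k : ℝ, (∫ z in Ioi (0:ℝ),
      ((g z : ℝ) : ℂ) * (1 - Complex.exp (-(Complex.I * (k:ℂ)) * ((φ z : ℝ) : ℂ))))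
      = ((∫ z in Ioi (0:ℝ), g z : ℝ) : ℂ)
        - ∫ z in Ioi (0:ℝ), ((g z : ℝ) : ℂ) * Complex.exp (-(Complex.I * (k:ℂ)) * ((φ z : ℝ) : ℂ)) := by
    intro k
    rw [← hconst, ← integral_sub hgintC (hEint k)]
    congr 1; funext z; ring
  -- properties of φ and ψ
  have hφpos : ∀ z : ℝ, (0:ℝ) < Real.exp z + 1 := fun z => by positivity
  have hφderiv : ∀ z ∈ Ioi (0:ℝ), HasDerivWithinAt φ (Real.exp z / (Real.exp z + 1)) (Ioi 0) z := by
    intro z _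
    exact (((Real.hasDerivAt_exp z).add_const 1).log (ne_of_gt (hφpos z))).hasDerivWithinAt
  have hφinj : InjOn φ (Ioi 0) := by
    intro x _ y _ h
    have h2 : Real.exp x + 1 = Real.exp y + 1 := by
      have := congrArg Real.exp h
      rwa [hφ, Real.exp_log (hφpos x), Real.exp_log (hφpos y)] at this
    exact Real.exp_injective (by linarith)
  have hψφ : ∀ z : ℝ, ψ (φ z) = z := by
    intro z
    simp only [hψ, hφ]
    rw [Real.exp_log (hφpos z)]
    simp [Real.log_exp]
  have hexpφ : ∀ z : ℝ, Real.exp (φ z) = Real.exp z + 1 := fun z => Real.exp_log (hφpos z)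
  have himg : φ '' Ioi 0 = Ioi (Real.log 2) := by
    ext ξ
    constructor
    · rintro ⟨z, hz, rfl⟩
      have : (2:ℝ) < Real.exp z + 1 := by
        have := Real.exp_lt_exp.2 (mem_Ioi.1 hz)
        simp only [Real.exp_zero] at this; linarith
      exact Real.log_lt_log (by norm_num) this
    · intro hξ
      have h2 : (2:ℝ) < Real.exp ξ := by
        have := Real.exp_lt_exp.2 (mem_Ioi.1 hξ)
        rwa [Real.exp_log (by norm_num : (0:ℝ) < 2)] at this
      refine ⟨ψ ξ, ?_, ?_⟩
      · have : (1:ℝ) < Real.exp ξ - 1 := by linarith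
        simpa [hψ] using Real.log_pos this
      · simp only [hφ, hψ]
        rw [Real.exp_log (by linarith : (0:ℝ) < Real.exp ξ - 1)]
        rw [sub_add_cancel, Real.log_exp]
  -- the transported function
  set Hf : ℝ → ℂ := fun ξ => ((Real.exp ξ / (Real.exp ξ - 1) * g (ψ ξ) : ℝ) : ℂ) with hHf
  set Hi : ℝ → ℂ := Set.indicator (Ioi (Real.log 2)) Hf with hHi
  -- change of variables
  have hchange : ∀ k : ℝ,
      (∫ z in Ioi (0:ℝ), ((g z : ℝ) : ℂ) * Complex.exp (-(Complex.I * (k:ℂ)) * ((φ z : ℝ) : ℂ)))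
      = ∫ ξ in Ioi (Real.log 2), Hf ξ * Complex.exp (-(Complex.I * (k:ℂ)) * ((ξ : ℝ) : ℂ)) := by
    intro k
    rw [← himg,
      integral_image_eq_integral_abs_deriv_smul measurableSet_Ioi hφderiv hφinj
        (fun ξ => Hf ξ * Complex.exp (-(Complex.I * (k:ℂ)) * ((ξ:ℝ):ℂ)))]
    refine setIntegral_congr_fun measurableSet_Ioi (fun z hz => ?_)
    have hd : |Real.exp z / (Real.exp z + 1)| = Real.exp z / (Real.exp z + 1) :=
      abs_of_pos (by positivity)
    rw [hd, Complex.real_smul]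
    simp only [hHf]
    rw [hψφ z, hexpφ z]
    have h1 : Real.exp z + 1 - 1 = Real.exp z := by ring
    rw [h1]
    push_cast
    have hne : (Real.exp z : ℂ) ≠ 0 := by
      exact_mod_cast Real.exp_ne_zero z
    have hne2 : ((Real.exp z + 1 : ℝ) : ℂ) ≠ 0 := by
      exact_mod_cast ne_of_gt (hφpos z)
    push_cast at hne2 ⊢
    field_simp
  -- identify with the Fourier integral of Hi
  have hfourier : ∀ k : ℝ,
      (∫ ξ in Ioi (Real.log 2), Hf ξ * Complex.exp (-(Complex.I * (k:ℂ)) * ((ξ : ℝ) : ℂ)))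
      = 𝓕 Hi (k / (2 * π)) := by
    intro k
    rw [Real.fourier_real_eq_integral_exp_smul]
    rw [← integral_indicator measurableSet_Ioi]
    congr 1
    funext ξ
    rw [hHi]
    by_cases hξ : ξ ∈ Ioi (Real.log 2)
    · rw [Set.indicator_of_mem hξ, Set.indicator_of_mem hξ, smul_eq_mul, mul_comm]
      congr 1
      congr 1
      have hπ : (π : ℂ) ≠ 0 := by exact_mod_cast Real.pi_ne_zero
      push_cast
      field_simp
    · rw [Set.indicator_of_notMem hξ, Set.indicator_of_notMem hξ, smul_zero]
  -- the oscillatory integral tends to zero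
  have hmap : Tendsto (fun k : ℝ => k / (2 * π)) (atBot ⊔ atTop) (cocompact ℝ) := by
    rw [cocompact_eq_atBot_atTop]
    rw [tendsto_sup]
    constructor
    · exact (tendsto_id.atBot_div_const (by positivity)).mono_right le_sup_left
    · exact (tendsto_id.atTop_div_const (by positivity)).mono_right le_sup_right
  have hzero : Tendsto (fun k : ℝ =>
      ∫ z in Ioi (0:ℝ), ((g z : ℝ) : ℂ) * Complex.exp (-(Complex.I * (k:ℂ)) * ((φ z : ℝ) : ℂ)))
      (atBot ⊔ atTop) (nhds 0) := by
    have := (Real.zero_at_infty_fourier Hi).comp hmap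
    refine this.congr fun k => ?_
    simp only [Function.comp_apply]
    rw [hchange k, hfourier k]
  -- conclude
  have : Tendsto (fun k : ℝ =>
      ((∫ z in Ioi (0:ℝ), g z : ℝ) : ℂ)
        - ∫ z in Ioi (0:ℝ), ((g z : ℝ) : ℂ) * Complex.exp (-(Complex.I * (k:ℂ)) * ((φ z : ℝ) : ℂ)))
      (atBot ⊔ atTop) (nhds (((∫ z in Ioi (0:ℝ), g z : ℝ) : ℂ) - 0)) :=
    tendsto_const_nhds.sub hzero
  rw [sub_zero] at this
  refine this.congr fun k => ?_
  rw [← hsplit k]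
end

section
/- Let γ, p ∈ ℝ with γ + 2p < 1 and let W₀ : [0,∞) → ℝ be measurable with |W₀(z)| ≤ C·e^{(γ/2+p)z} for all z ≥ 0. Then ∫₀^{∞} e^{−z/2} W₀(z) e^{ikz}·(1 − (e^z+1)^{−ik}) dz → 0 as |k| → ∞ (k ∈ ℝ). -/
open MeasureTheory Real Set Filter

noncomputable def stmt16phi (z : ℝ) : ℝ := z - Real.log (Real.exp z + 1)
noncomputable def stmt16psi (u : ℝ) : ℝ := u - Real.log (1 - Real.exp u)

lemma stmt16_psi_phi (z : ℝ) : stmt16psi (stmt16phi z) = z := by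
  have h0 : (0:ℝ) < Real.exp z + 1 := by positivity
  have he : Real.exp (stmt16phi z) = Real.exp z / (Real.exp z + 1) := by
    rw [stmt16phi, Real.exp_sub, Real.exp_log h0]
  have h1 : 1 - Real.exp (stmt16phi z) = 1 / (Real.exp z + 1) := by
    rw [he]; field_simp; ring
  rw [stmt16psi, h1, Real.log_div one_ne_zero h0.ne', Real.log_one, stmt16phi]
  ring

lemma stmt16_phi_mem {z : ℝ} (hz : 0 < z) : stmt16phi z ∈ Ioo (-Real.log 2) 0 := by
  have h0 : (0:ℝ) < Real.exp z := Real.exp_pos z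
  have h2 : z < Real.log (Real.exp z + 1) := by
    have := Real.log_lt_log h0 (lt_add_of_pos_right _ one_pos)
    rwa [Real.log_exp] at this
  have h3 : (1:ℝ) < Real.exp z := by
    have := Real.exp_lt_exp.mpr hz; rwa [Real.exp_zero] at this
  have h4 : Real.log (Real.exp z + 1) < Real.log 2 + z := by
    have := Real.log_lt_log (by positivity : (0:ℝ) < Real.exp z + 1)
      (by linarith : Real.exp z + 1 < 2 * Real.exp z)
    rwa [Real.log_mul two_ne_zero (Real.exp_ne_zero z), Real.log_exp] at this
  exact ⟨by rw [stmt16phi]; linarith, by rw [stmt16phi]; linarith⟩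

lemma stmt16_phi_image : stmt16phi '' Ioi 0 = Ioo (-Real.log 2) 0 := by
  ext u
  constructor
  · rintro ⟨z, hz, rfl⟩; exact stmt16_phi_mem hz
  · rintro ⟨hu1, hu2⟩
    have heu1 : Real.exp u < 1 := by
      have := Real.exp_lt_exp.mpr hu2; rwa [Real.exp_zero] at this
    have he1 : (0:ℝ) < 1 - Real.exp u := by linarith
    have hhalf : (1:ℝ)/2 < Real.exp u := by
      have := Real.exp_lt_exp.mpr hu1
      rwa [Real.exp_neg, Real.exp_log two_pos, ← one_div] at this
    have hlog : Real.log (1 - Real.exp u) < u := by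
      have := Real.log_lt_log he1 (by linarith : 1 - Real.exp u < Real.exp u)
      rwa [Real.log_exp] at this
    refine ⟨stmt16psi u, ?_, ?_⟩
    · rw [mem_Ioi, stmt16psi]; linarith
    · have he : Real.exp (stmt16psi u) = Real.exp u / (1 - Real.exp u) := by
        rw [stmt16psi, Real.exp_sub, Real.exp_log he1]
      have h1 : Real.exp (stmt16psi u) + 1 = 1 / (1 - Real.exp u) := by
        rw [he]; field_simp; ring
      rw [stmt16phi, h1, Real.log_div one_ne_zero he1.ne', Real.log_one, stmt16psi]
      ring

lemma stmt16_phi_inj : InjOn stmt16phi (Ioi 0) :=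
  fun a _ b _ h => by rw [← stmt16_psi_phi a, h, stmt16_psi_phi b]

lemma stmt16_phi_deriv (z : ℝ) :
    HasDerivWithinAt stmt16phi (1 / (Real.exp z + 1)) (Ioi 0) z := by
  have h0 : (0:ℝ) < Real.exp z + 1 := by positivity
  have h2 : HasDerivAt (fun z => Real.log (Real.exp z + 1))
      ((Real.exp z + 1)⁻¹ * Real.exp z) z := by
    have := (Real.hasDerivAt_log h0.ne').comp z ((Real.hasDerivAt_exp z).add_const 1); exact this
  have h : HasDerivAt stmt16phi (1 - (Real.exp z + 1)⁻¹ * Real.exp z) z :=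
    (hasDerivAt_id z).sub h2
  have : 1 - (Real.exp z + 1)⁻¹ * Real.exp z = 1 / (Real.exp z + 1) := by field_simp; ring
  rw [this] at h
  exact h.hasDerivWithinAt

set_option maxHeartbeats 1000000 in
lemma stmt16_rl (f : ℝ → ℂ) :
    Tendsto (fun k : ℝ => ∫ v : ℝ, f v * Complex.exp (Complex.I * k * v))
      (atBot ⊔ atTop) (nhds 0) := by
  have h := Real.tendsto_integral_exp_smul_cocompact f
  have hmap : Tendsto (fun k : ℝ => -k / (2 * π)) (atBot ⊔ atTop) (cocompact ℝ) := by
    rw [cocompact_eq_atBot_atTop, tendsto_sup]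
    constructor
    · exact (tendsto_neg_atBot_atTop.atTop_div_const (by positivity)).mono_right le_sup_right
    · exact (tendsto_neg_atTop_atBot.atBot_div_const (by positivity)).mono_right le_sup_left
  have h2 := h.comp hmap
  refine h2.congr fun k => ?_
  simp only [Function.comp_apply]
  refine integral_congr_ae (Eventually.of_forall fun v => ?_)
  show (Real.fourierChar (-(v * (-k / (2 * π)))) : ℂ) * f v = f v * Complex.exp (Complex.I * k * v)
  rw [Real.fourierChar_apply, mul_comm]
  congr 2
  have hπ : (π : ℂ) ≠ 0 := by exact_mod_cast Real.pi_ne_zero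
  push_cast
  field_simp

set_option maxHeartbeats 1000000 in
/-- for `γ+2p < 1` and measurable `W₀` with `|W₀(z)| ≤ C e^{(γ/2+p)z}`
on `[0,∞)`, one has `∫₀^∞ e^{−z/2} W₀(z) e^{ikz}(1 − (e^z+1)^{−ik}) dz → 0` as `|k| → ∞`. -/
theorem stmt_16 (γ p : ℝ) (h1 : γ + 2 * p < 1)
    (W₀ : ℝ → ℝ) (hWmeas : Measurable W₀) (C : ℝ)
    (hW : ∀ z : ℝ, 0 ≤ z → |W₀ z| ≤ C * Real.exp ((γ / 2 + p) * z)) :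
    Filter.Tendsto
      (fun k : ℝ => ∫ z in Set.Ioi (0 : ℝ),
        ((Real.exp (-z / 2) * W₀ z : ℝ) : ℂ) *
          Complex.exp (Complex.I * (k : ℂ) * (z : ℂ)) *
          (1 - Complex.exp (-(Complex.I * (k : ℂ)) *
            ((Real.log (Real.exp z + 1) : ℝ) : ℂ))))
      (Filter.atBot ⊔ Filter.atTop)
      (nhds 0) := by
  set c : ℝ → ℂ := fun z => ((Real.exp (-z / 2) * W₀ z : ℝ) : ℂ) with hc_def
  have hcmeas : Measurable c := by rw [hc_def]; fun_prop
  have hb : (0:ℝ) < 1/2 - (γ/2 + p) := by linarith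
  -- integrability of `c` on `Ioi 0`
  have hInt : IntegrableOn c (Ioi 0) := by
    refine Integrable.mono' ((exp_neg_integrableOn_Ioi 0 hb).const_mul C)
      hcmeas.aestronglyMeasurable ?_
    filter_upwards [ae_restrict_mem measurableSet_Ioi] with z hz
    have hcz : ‖c z‖ = Real.exp (-z/2) * |W₀ z| := by
      simp only [hc_def, Complex.norm_real, Real.norm_eq_abs, abs_mul,
        abs_of_pos (Real.exp_pos _)]
    calc ‖c z‖ ≤ Real.exp (-z/2) * (C * Real.exp ((γ/2 + p) * z)) := by
          rw [hcz]
          exact mul_le_mul_of_nonneg_left (hW z hz.le) (Real.exp_pos _).le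
      _ = C * Real.exp (-(1/2 - (γ/2 + p)) * z) := by
          rw [mul_comm (Real.exp (-z/2)), mul_assoc, ← Real.exp_add,
            show (γ/2 + p) * z + -z/2 = -(1/2 - (γ/2 + p)) * z from by ring]
  -- norms of unimodular factors
  have hnorm : ∀ (k t : ℝ), ‖Complex.exp (Complex.I * k * t)‖ = 1 := by
    intro k t
    rw [show Complex.I * (k:ℂ) * (t:ℂ) = ((k*t : ℝ):ℂ) * Complex.I from by push_cast; ring,
      Complex.norm_exp_ofReal_mul_I]
  have hIk1 : ∀ k : ℝ, IntegrableOn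
      (fun z => c z * Complex.exp (Complex.I * k * z)) (Ioi 0) := by
    intro k
    refine hInt.norm.mono' ((hcmeas.mul (by fun_prop)).aestronglyMeasurable) ?_
    filter_upwards with z
    rw [norm_mul, hnorm]; simp
  have hphimeas : Measurable stmt16phi := by
    unfold stmt16phi
    exact measurable_id.sub (Real.measurable_log.comp (Real.measurable_exp.add_const 1))
  have hIk2 : ∀ k : ℝ, IntegrableOn
      (fun z => c z * Complex.exp (Complex.I * k * (stmt16phi z : ℝ))) (Ioi 0) := by
    intro k
    refine hInt.norm.mono'
      ((hcmeas.mul (Complex.measurable_exp.comp (by fun_prop))).aestronglyMeasurable) ?_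
    filter_upwards with z
    rw [norm_mul, hnorm]; simp
  -- the pointwise splitting
  have hED : ∀ (k z : ℝ), Complex.exp (Complex.I * k * z) *
      Complex.exp (-(Complex.I * k) * ((Real.log (Real.exp z + 1) : ℝ) : ℂ)) =
      Complex.exp (Complex.I * k * (stmt16phi z : ℝ)) := by
    intro k z
    rw [← Complex.exp_add]
    congr 1
    rw [stmt16phi]
    push_cast
    ring
  have hsplit : ∀ k : ℝ,
      (∫ z in Ioi (0:ℝ), c z * Complex.exp (Complex.I * k * z) *
        (1 - Complex.exp (-(Complex.I * k) * ((Real.log (Real.exp z + 1) : ℝ) : ℂ)))) =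
      (∫ z in Ioi (0:ℝ), c z * Complex.exp (Complex.I * k * z)) -
      (∫ z in Ioi (0:ℝ), c z * Complex.exp (Complex.I * k * (stmt16phi z : ℝ))) := by
    intro k
    rw [← integral_sub (hIk1 k) (hIk2 k)]
    refine integral_congr_ae (Eventually.of_forall fun z => ?_)
    simp only [mul_sub, mul_one]
    rw [mul_assoc (c z), hED k z]
  -- first piece tends to zero
  have hA : Tendsto (fun k : ℝ => ∫ z in Ioi (0:ℝ), c z * Complex.exp (Complex.I * k * z))
      (atBot ⊔ atTop) (nhds 0) := by
    refine (stmt16_rl (Set.indicator (Ioi 0) c)).congr fun k => ?_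
    rw [← integral_indicator measurableSet_Ioi]
    refine integral_congr_ae (Eventually.of_forall fun z => ?_)
    by_cases h : z ∈ Ioi (0:ℝ) <;>
      simp [Set.indicator_of_mem, Set.indicator_of_notMem, h]
  -- second piece: change of variables then Riemann–Lebesgue
  have hB : Tendsto
      (fun k : ℝ => ∫ z in Ioi (0:ℝ), c z * Complex.exp (Complex.I * k * (stmt16phi z : ℝ)))
      (atBot ⊔ atTop) (nhds 0) := by
    refine (stmt16_rl (Set.indicator (Ioo (-Real.log 2) 0)
      (fun u => c (stmt16psi u) * ((Real.exp (stmt16psi u) + 1 : ℝ) : ℂ)))).congr fun k => ?_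
    have step1 : (∫ v : ℝ, Set.indicator (Ioo (-Real.log 2) 0)
        (fun u => c (stmt16psi u) * ((Real.exp (stmt16psi u) + 1 : ℝ) : ℂ)) v *
          Complex.exp (Complex.I * k * v)) =
        ∫ u in Ioo (-Real.log 2) 0,
          (c (stmt16psi u) * ((Real.exp (stmt16psi u) + 1 : ℝ) : ℂ)) *
            Complex.exp (Complex.I * k * u) := by
      rw [← integral_indicator measurableSet_Ioo]
      refine integral_congr_ae (Eventually.of_forall fun u => ?_)
      by_cases h : u ∈ Ioo (-Real.log 2) (0:ℝ) <;>
        simp [Set.indicator_of_mem, Set.indicator_of_notMem, h]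
    rw [step1, ← stmt16_phi_image,
      integral_image_eq_integral_abs_deriv_smul measurableSet_Ioi
        (fun z _ => stmt16_phi_deriv z) stmt16_phi_inj]
    refine integral_congr_ae ((ae_restrict_mem measurableSet_Ioi).mono fun z hz => ?_)
    have h0 : (0:ℝ) < Real.exp z + 1 := by positivity
    have hne : ((Real.exp z + 1 : ℝ) : ℂ) ≠ 0 := by exact_mod_cast h0.ne'
    simp only [stmt16_psi_phi]
    rw [abs_of_pos (by positivity : (0:ℝ) < 1 / (Real.exp z + 1)), Complex.real_smul]
    push_cast at hne ⊢
    field_simp [hne]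
  have hAB := hA.sub hB
  rw [sub_zero] at hAB
  exact hAB.congr fun k => (hsplit k).symm
end
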